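/- arXiv:2505.01268 — 2 statements merged into one kernel-verified Lean document; each statement's English description precedes it below -/
import Mathlib

section
/- Let m, n_1, n_2 ∈ ℕ+ and let Γ_1, Γ_2 be groups equipped with proper left-invariant metrics d_1, d_2 having the (m,n_1)-DTUT and (m,n_2)-DTUT properties respectively. Then the direct product Γ_1 × Γ_2, equipped with the proper left-invariant metric d((a,b),(a',b')) = d_1(a,a') + d_2(b,b'), has the (m, n_1·n_2 + n_1 + n_2)-DTUT property. -/
open Metric Set Function

namespace APC

variable {X Y : Type*}

/-- A family `𝒰` of subsets of a metric space is `r`-disjoint if any two distinct members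
are at distance at least `r`. -/
def RDisjoint [MetricSpace X] (r : ℝ) (𝒰 : Set (Set X)) : Prop :=
  ∀ U ∈ 𝒰, ∀ V ∈ 𝒰, U ≠ V → ∀ x ∈ U, ∀ y ∈ V, r ≤ dist x y

/-- A family `𝒰` is `R`-bounded if every member has diameter at most `R`. -/
def RBounded [MetricSpace X] (R : ℝ) (𝒰 : Set (Set X)) : Prop :=
  ∀ U ∈ 𝒰, ∀ x ∈ U, ∀ y ∈ U, dist x y ≤ R

/-- A family is uniformly bounded if it is `R`-bounded for some `R > 0`. -/
def UnifBounded [MetricSpace X] (𝒰 : Set (Set X)) : Prop :=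
  ∃ R : ℝ, 0 < R ∧ RBounded R 𝒰

/-- `asdim X ≤ n`. -/
def AsdimLE (X : Type*) [MetricSpace X] (n : ℕ) : Prop :=
  ∀ r : ℝ, 0 < r → ∃ 𝒰 : Fin (n + 1) → Set (Set X),
    (∀ i, UnifBounded (𝒰 i)) ∧ (∀ i, RDisjoint r (𝒰 i)) ∧ (⋃ i, ⋃₀ 𝒰 i) = Set.univ

/-- `X` has finite asymptotic dimension. -/
def HasFiniteAsdim (X : Type*) [MetricSpace X] : Prop := ∃ n : ℕ, AsdimLE X n

/-- Asymptotic property C. -/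
def HasAPC (X : Type*) [MetricSpace X] : Prop :=
  ∀ R : ℕ → ℝ, (∀ i, 0 < R i) → StrictMono R →
    ∃ n : ℕ, ∃ 𝒰 : Fin (n + 1) → Set (Set X),
      (∀ i, UnifBounded (𝒰 i)) ∧ (∀ i : Fin (n + 1), RDisjoint (R i) (𝒰 i)) ∧
      (⋃ i, ⋃₀ 𝒰 i) = Set.univ

/-- `M^a`, the derivative of a collection of finite nonempty subsets of `ℕ`. -/
def deriv (M : Set (Finset ℕ)) (a : ℕ) : Set (Finset ℕ) :=
  {τ | τ.Nonempty ∧ a ∉ τ ∧ insert a τ ∈ M}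

/-- `OrdLE α M` means `Ord M ≤ α` in the sense of Radul: either `M = ∅`
(so that `Ord M = 0`), or `Ord M^a < α` for every `a : ℕ`.  Defined by
well-founded recursion on the ordinal `α`. -/
def OrdLE : Ordinal.{0} → Set (Finset ℕ) → Prop :=
  Ordinal.lt_wf.fix (C := fun _ => Set (Finset ℕ) → Prop)
    (fun α IH M => M = ∅ ∨ ∀ a : ℕ, ∃ β : Ordinal.{0}, ∃ hβ : β < α, IH β hβ (deriv M a))

/-- The collection `A(X,d)` of finite nonempty subsets `σ ⊆ ℕ` such that there is no
covering of `X` by uniformly bounded families `𝒰ᵢ` (`i ∈ σ`), each `i`-disjoint. -/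
def AClass (X : Type*) [MetricSpace X] : Set (Finset ℕ) :=
  {σ | σ.Nonempty ∧ ¬ ∃ 𝒰 : ℕ → Set (Set X),
      (∀ i ∈ σ, UnifBounded (𝒰 i)) ∧ (∀ i ∈ σ, RDisjoint (i : ℝ) (𝒰 i)) ∧
      (⋃ i ∈ σ, ⋃₀ 𝒰 i) = Set.univ}

/-- `trasdim X ≤ α`. -/
def TrasdimLE (X : Type*) [MetricSpace X] (α : Ordinal.{0}) : Prop :=
  OrdLE α (AClass X)

/-- The `(m,n)`-DTUT property: disjointness of the `(m,n)`-tiling through uniform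
translation. -/
def DTUT (X : Type*) [MetricSpace X] (m n : ℕ) : Prop :=
  ∃ F : Fin m → ℕ,
    ∀ h : ℕ+ → ℕ+, ∀ k : Fin (m + 1) → ℕ+, StrictMono k →
      ∃ C : (Fin m → ℕ+) → Fin (n + 1) → Set (Set X),
      ∃ D : (Fin m → ℕ+) → (i : Fin m) → Fin (F i + 1) → Set (Set X),
        ∀ l : Fin m → ℕ+, (∀ r : Fin m, l r ≤ h (k r.succ)) →
          ((∀ j, UnifBounded (C l j)) ∧
           (∀ i s, UnifBounded (D l i s)) ∧
           (∀ j, RDisjoint ((k 0 : ℕ) : ℝ) (C l j)) ∧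
           (∀ (i : Fin m) (s : Fin (F i + 1)), RDisjoint ((k i.succ : ℕ) : ℝ) (D l i s)) ∧
           ((⋃ j, ⋃₀ C l j) ∪ (⋃ i, ⋃ s, ⋃₀ D l i s) = Set.univ)) ∧
          (∀ (i : Fin m) (s : Fin (F i + 1)),
            (∀ t : ℕ+, t ≤ h (k i.succ) →
              (⋃₀ D (Function.update l i t) i s).Nonempty) ∧
            (∀ t t' : ℕ+, t ≤ h (k i.succ) → t' ≤ h (k i.succ) → t ≠ t' →
              Disjoint (⋃₀ D (Function.update l i t) i s)
                (⋃₀ D (Function.update l i t') i s)) ∧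
            RDisjoint ((k i.succ : ℕ) : ℝ)
              (⋃ t ∈ {t : ℕ+ | t ≤ h (k i.succ)}, D (Function.update l i t) i s))

/-- The word length of `g` with respect to the symmetrized generating set `S ∪ S⁻¹`. -/
noncomputable def wordLength {G : Type*} [Group G] (S : Set G) (g : G) : ℕ :=
  sInf {n : ℕ | ∃ L : List G, (∀ x ∈ L, x ∈ S ∨ x⁻¹ ∈ S) ∧ L.prod = g ∧ L.length = n}

/-- A group is FC if every conjugacy class is finite. -/
def IsFCGroup (G : Type*) [Group G] : Prop :=
  ∀ x : G, Set.Finite {y : G | ∃ g : G, g * x * g⁻¹ = y}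

/-- A metric on a countable discrete space is proper if every ball is finite. -/
def ProperMet (X : Type*) [MetricSpace X] : Prop :=
  ∀ (x : X) (R : ℝ), (Metric.closedBall x R).Finite

/-- Left invariance of a metric on a group. -/
def LeftInvariant (G : Type*) [Group G] [MetricSpace G] : Prop :=
  ∀ g x y : G, dist (g * x) (g * y) = dist x y

/-- Bornologous maps. -/
def Bornologous [MetricSpace X] [MetricSpace Y] (f : X → Y) : Prop :=
  ∀ R : ℝ, 0 < R → ∃ P : ℝ, 0 < P ∧ ∀ x y : X, dist x y < R → dist (f x) (f y) < P

/-- Coarse embeddings. -/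
def CoarseEmbedding [MetricSpace X] [MetricSpace Y] (f : X → Y) : Prop :=
  ∃ ρminus ρplus : ℝ → ℝ, Monotone ρminus ∧ Monotone ρplus ∧
    Filter.Tendsto ρminus Filter.atTop Filter.atTop ∧
    (∀ x y : X, ρminus (dist x y) ≤ dist (f x) (f y) ∧ dist (f x) (f y) ≤ ρplus (dist x y))

/-- Coarse equivalences: coarse embeddings with coarsely dense image. -/
def CoarseEquiv [MetricSpace X] [MetricSpace Y] (f : X → Y) : Prop :=
  CoarseEmbedding f ∧ ∃ C : ℝ, 0 < C ∧ ∀ y : Y, ∃ x : X, dist y (f x) ≤ C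

end APC

open APC Set

/-!
Run the tilings of both factors with the constant height `N > 2 · max h` and the scales
`k_j + k_m`, which dominate every `k_j`, at the doubled parameter `2l`. The `C`-families of the
product are the boxes `C¹_a × C²_b`. In direction `i` take the boxes `D¹_{i,s} × 𝒱` for every
family `𝒱` of the second factor, and symmetrically. Two such boxes over translates `t, t'` are
`k_i`-apart: either their first sides are distinct members of the `k_i`-disjoint union of all
translates, or they coincide, which forces `t = t'`, and then the second sides are distinct
members of one disjoint family. As `𝒱` may be empty, every family is padded by the odd translate
`D¹_{i,s}(2t + 1) × {y₀}`; odd and even translates are disjoint, so nonemptiness and the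
disjointness of different `t` survive.
-/

namespace APC

variable {X Y Z ι : Type*} {m n : ℕ}

section Families

variable [MetricSpace X]

theorem RDisjoint.of_le {r r' : ℝ} {𝒰 : Set (Set X)} (H : RDisjoint r' 𝒰) (h : r ≤ r') :
    RDisjoint r 𝒰 :=
  fun U hU V hV hUV x hx y hy => h.trans (H U hU V hV hUV x hx y hy)

theorem RDisjoint.mono {r : ℝ} {𝒰 𝒱 : Set (Set X)} (H : RDisjoint r 𝒰) (h : 𝒱 ⊆ 𝒰) :
    RDisjoint r 𝒱 :=
  fun U hU V hV => H U (h hU) V (h hV)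

theorem rDisjoint_singleton (r : ℝ) (U : Set X) : RDisjoint r {U} := by
  rintro _ rfl _ rfl h
  exact absurd rfl h

theorem UnifBounded.union {𝒰 𝒱 : Set (Set X)} (h𝒰 : UnifBounded 𝒰) (h𝒱 : UnifBounded 𝒱) :
    UnifBounded (𝒰 ∪ 𝒱) := by
  obtain ⟨R₁, hR₁, h₁⟩ := h𝒰
  obtain ⟨R₂, -, h₂⟩ := h𝒱
  refine ⟨max R₁ R₂, lt_max_of_lt_left hR₁, ?_⟩
  rintro U (hU | hU) x hx y hy
  · exact (h₁ U hU x hx y hy).trans (le_max_left _ _)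
  · exact (h₂ U hU x hx y hy).trans (le_max_right _ _)

theorem unifBounded_singleton_singleton (x : X) : UnifBounded {{x}} :=
  ⟨1, one_pos, by rintro _ rfl _ rfl _ rfl; simp⟩

/-- The translation clause of `DTUT` in direction `i` at the parameter vector `l`. -/
def Translates (H : ℕ+) (r : ℝ) (D : (Fin m → ℕ+) → Set (Set X)) (i : Fin m)
    (l : Fin m → ℕ+) : Prop :=
  (∀ t ≤ H, (⋃₀ D (update l i t)).Nonempty) ∧
    (∀ t t', t ≤ H → t' ≤ H → t ≠ t' → Disjoint (⋃₀ D (update l i t)) (⋃₀ D (update l i t'))) ∧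
    RDisjoint r (⋃ t ∈ Iic H, D (update l i t))

/-- The covering clause of `DTUT` at one parameter vector. -/
def IsCover {F : Fin m → ℕ} (k : Fin (m + 1) → ℕ+) (C : Fin (n + 1) → Set (Set X))
    (D : (i : Fin m) → Fin (F i + 1) → Set (Set X)) : Prop :=
  (∀ j, UnifBounded (C j)) ∧ (∀ i s, UnifBounded (D i s)) ∧
    (∀ j, RDisjoint ((k 0 : ℕ) : ℝ) (C j)) ∧
    (∀ i s, RDisjoint ((k i.succ : ℕ) : ℝ) (D i s)) ∧
    (⋃ j, ⋃₀ C j) ∪ (⋃ i, ⋃ s, ⋃₀ D i s) = univ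

def IsDTUTTiling {F : Fin m → ℕ} (h : ℕ+ → ℕ+) (k : Fin (m + 1) → ℕ+)
    (C : (Fin m → ℕ+) → Fin (n + 1) → Set (Set X))
    (D : (Fin m → ℕ+) → (i : Fin m) → Fin (F i + 1) → Set (Set X)) : Prop :=
  ∀ l : Fin m → ℕ+, (∀ r, l r ≤ h (k r.succ)) →
    IsCover k (C l) (D l) ∧
      ∀ i s, Translates (h (k i.succ)) ((k i.succ : ℕ) : ℝ) (fun l => D l i s) i l

theorem dtut_iff : DTUT X m n ↔ ∃ F : Fin m → ℕ, ∀ h k, StrictMono k →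
    ∃ C D, IsDTUTTiling (F := F) (X := X) (n := n) h k C D :=
  Iff.rfl

namespace Translates

variable {H : ℕ+} {r : ℝ} {D : (Fin m → ℕ+) → Set (Set X)} {i : Fin m} {l : Fin m → ℕ+}

theorem of_le {r' : ℝ} (h : Translates H r' D i l) (hr : r ≤ r') : Translates H r D i l :=
  ⟨h.1, h.2.1, h.2.2.of_le hr⟩

theorem pairwiseDisjoint (h : Translates H r D i l) :
    (Iic H).PairwiseDisjoint fun t => ⋃₀ D (update l i t) :=
  fun t ht t' ht' htt => h.2.1 t t' ht ht' htt

theorem rDisjoint (h : Translates H r D i l) (hl : l i ≤ H) : RDisjoint r (D l) := by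
  simpa using h.2.2.mono (subset_biUnion_of_mem (u := fun t => D (update l i t)) hl)

end Translates

section AllFams

variable {F : Fin m → ℕ} {k : Fin (m + 1) → ℕ+} {C : Fin (n + 1) → Set (Set X)}
  {D : (i : Fin m) → Fin (F i + 1) → Set (Set X)}

abbrev FamIdx (n : ℕ) (F : Fin m → ℕ) : Type := Fin (n + 1) ⊕ Σ i, Fin (F i + 1)

def allFams (C : Fin (n + 1) → Set (Set X)) (D : (i : Fin m) → Fin (F i + 1) → Set (Set X)) :
    FamIdx n F → Set (Set X) :=
  Sum.elim C fun p => D p.1 p.2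

theorem IsCover.unifBounded_allFams (h : IsCover k C D) : ∀ w, UnifBounded (allFams C D w)
  | .inl j => h.1 j
  | .inr ⟨i, s⟩ => h.2.1 i s

theorem IsCover.rDisjoint_allFams {r : ℝ} (h : IsCover k C D) (hr : ∀ j, r ≤ ((k j : ℕ) : ℝ)) :
    ∀ w, RDisjoint r (allFams C D w)
  | .inl j => (h.2.2.1 j).of_le (hr 0)
  | .inr ⟨i, s⟩ => (h.2.2.2.1 i s).of_le (hr i.succ)

theorem IsCover.iUnion_allFams (h : IsCover k C D) : ⋃ w, ⋃₀ allFams C D w = univ := by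
  rw [← h.2.2.2.2, iUnion_sum, iUnion_sigma]
  rfl

end AllFams

end Families

section Rects

variable (f : Z → X) (g : Z → Y)

def rects (𝒰 : Set (Set X)) (𝒱 : Set (Set Y)) : Set (Set Z) :=
  image2 (fun U V => f ⁻¹' U ∩ g ⁻¹' V) 𝒰 𝒱

variable {f g} {𝒰 : Set (Set X)} {𝒱 : Set (Set Y)}

theorem mem_sUnion_rects {U : Set X} {V : Set Y} {p : Z} (hU : U ∈ 𝒰) (hV : V ∈ 𝒱)
    (hpU : f p ∈ U) (hpV : g p ∈ V) : p ∈ ⋃₀ rects f g 𝒰 𝒱 :=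
  ⟨_, mem_image2_of_mem hU hV, hpU, hpV⟩

theorem sUnion_rects_subset : ⋃₀ rects f g 𝒰 𝒱 ⊆ f ⁻¹' ⋃₀ 𝒰 := by
  rintro p ⟨_, ⟨U, hU, V, -, rfl⟩, hpU, -⟩
  exact ⟨U, hU, hpU⟩

variable [MetricSpace X] [MetricSpace Y] [MetricSpace Z]

theorem rects_unifBounded (hle : ∀ p q, dist p q ≤ dist (f p) (f q) + dist (g p) (g q))
    (h𝒰 : UnifBounded 𝒰) (h𝒱 : UnifBounded 𝒱) : UnifBounded (rects f g 𝒰 𝒱) := by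
  obtain ⟨R₁, hR₁, h₁⟩ := h𝒰
  obtain ⟨R₂, hR₂, h₂⟩ := h𝒱
  refine ⟨R₁ + R₂, add_pos hR₁ hR₂, ?_⟩
  rintro _ ⟨U, hU, V, hV, rfl⟩ p ⟨hpU, hpV⟩ q ⟨hqU, hqV⟩
  exact (hle p q).trans (add_le_add (h₁ U hU _ hpU _ hqU) (h₂ V hV _ hpV _ hqV))

theorem rDisjoint_biUnion_rects (hf : ∀ p q, dist (f p) (f q) ≤ dist p q)
    (hg : ∀ p q, dist (g p) (g q) ≤ dist p q) {r : ℝ} {T : Set ι} {𝒰 : ι → Set (Set X)}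
    {𝒱 : ι → Set (Set Y)} (h𝒰 : RDisjoint r (⋃ t ∈ T, 𝒰 t))
    (hT : T.PairwiseDisjoint fun t => ⋃₀ 𝒰 t) (h𝒱 : ∀ t ∈ T, RDisjoint r (𝒱 t)) :
    RDisjoint r (⋃ t ∈ T, rects f g (𝒰 t) (𝒱 t)) := by
  intro S hS S' hS' hSS' p hp q hq
  simp only [mem_iUnion, exists_prop] at hS hS'
  obtain ⟨t, ht, U, hU, V, hV, rfl⟩ := hS
  obtain ⟨t', ht', U', hU', V', hV', rfl⟩ := hS'
  by_cases hUU' : U = U'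
  · subst hUU'
    obtain rfl : t = t' :=
      hT.elim ht ht' (not_disjoint_iff.2 ⟨f p, ⟨U, hU, hp.1⟩, ⟨U, hU', hp.1⟩⟩)
    have hVV' : V ≠ V' := by
      rintro rfl
      exact hSS' rfl
    exact (h𝒱 t ht V hV V' hV' hVV' _ hp.2 _ hq.2).trans (hg p q)
  · exact (h𝒰 U (mem_biUnion ht hU) U' (mem_biUnion ht' hU') hUU' _ hp.1 _ hq.1).trans (hf p q)

theorem rects_rDisjoint (hf : ∀ p q, dist (f p) (f q) ≤ dist p q)
    (hg : ∀ p q, dist (g p) (g q) ≤ dist p q) {r : ℝ} (h𝒰 : RDisjoint r 𝒰)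
    (h𝒱 : RDisjoint r 𝒱) : RDisjoint r (rects f g 𝒰 𝒱) := by
  have := rDisjoint_biUnion_rects hf hg (T := {()}) (𝒰 := fun _ => 𝒰) (𝒱 := fun _ => 𝒱)
    (by rwa [biUnion_singleton]) (pairwiseDisjoint_singleton _ _) (by simpa using h𝒱)
  rwa [biUnion_singleton] at this

end Rects

theorem two_mul_update (l : Fin m → ℕ+) (i : Fin m) (t : ℕ+) :
    2 * update l i t = update (2 * l) i (2 * t) := by
  ext j
  rcases eq_or_ne j i with rfl | hj <;> simp [*]

theorem forall_update_le {N : ℕ+} {b : Fin m → ℕ+} (hb : ∀ j, b j ≤ N) {i : Fin m} {v : ℕ+}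
    (hv : v ≤ N) : ∀ j, update b i v j ≤ N :=
  (forall_update_iff b fun _ x => x ≤ N).2 ⟨hv, fun j _ => hb j⟩

theorem disjoint_slots {α : Type*} {N t t' : ℕ+} {φ : ℕ+ → Set α}
    (hφ : (Iic N).PairwiseDisjoint φ) (ht : 2 * t < N) (ht' : 2 * t' < N) (htt : t ≠ t') :
    Disjoint (φ (2 * t) ∪ φ (2 * t + 1)) (φ (2 * t') ∪ φ (2 * t' + 1)) := by
  have hslot {s : ℕ+} (hs : 2 * s < N) : 2 * s ∈ Iic N ∧ 2 * s + 1 ∈ Iic N :=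
    ⟨hs.le, PNat.add_one_le_iff.2 hs⟩
  have htt' : (t : ℕ) ≠ t' := fun h => htt (PNat.coe_injective h)
  simp only [disjoint_union_left, disjoint_union_right]
  refine ⟨⟨hφ (hslot ht).1 (hslot ht').1 ?_, hφ (hslot ht).2 (hslot ht').1 ?_⟩,
    hφ (hslot ht).1 (hslot ht').2 ?_, hφ (hslot ht).2 (hslot ht').2 ?_⟩ <;>
  · rw [Ne, ← PNat.coe_inj]
    push_cast
    omega

section Product

variable (f : Z → X) (g : Z → Y)

def paddedRects (D : (Fin m → ℕ+) → Set (Set X)) (𝒱 : (Fin m → ℕ+) → Set (Set Y)) (y₀ : Y)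
    (i : Fin m) (l : Fin m → ℕ+) : Set (Set Z) :=
  rects f g (D (2 * l)) (𝒱 (2 * l)) ∪ rects f g (D (update (2 * l) i (2 * l i + 1))) {{y₀}}

variable {f g} {D : (Fin m → ℕ+) → Set (Set X)} {𝒱 : (Fin m → ℕ+) → Set (Set Y)} {y₀ : Y}
  {i : Fin m} {l : Fin m → ℕ+} {N : ℕ+}

theorem paddedRects_update (t : ℕ+) :
    paddedRects f g D 𝒱 y₀ i (update l i t) =
      rects f g (D (update (2 * l) i (2 * t))) (𝒱 (update (2 * l) i (2 * t))) ∪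
        rects f g (D (update (2 * l) i (2 * t + 1))) {{y₀}} := by
  simp only [paddedRects, two_mul_update, update_self, update_idem]

theorem subset_sUnion_paddedRects :
    ⋃₀ rects f g (D (2 * l)) (𝒱 (2 * l)) ⊆ ⋃₀ paddedRects f g D 𝒱 y₀ i l :=
  sUnion_mono subset_union_left

variable [MetricSpace X] [MetricSpace Y] [MetricSpace Z]

/-- `f` and `g` identify `Z` with `X × Y` carrying a metric between the maximum and the sum
metric; stated this way, the two factors can swap roles. -/
structure ProductCoords (f : Z → X) (g : Z → Y) : Prop where
  surjective : Surjective fun p => (f p, g p)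
  dist_fst_le : ∀ p q, dist (f p) (f q) ≤ dist p q
  dist_snd_le : ∀ p q, dist (g p) (g q) ≤ dist p q
  dist_le_add : ∀ p q, dist p q ≤ dist (f p) (f q) + dist (g p) (g q)

theorem ProductCoords.swap {f : Z → X} {g : Z → Y} (h : ProductCoords f g) :
    ProductCoords g f where
  surjective := Prod.swap_surjective.comp h.surjective
  dist_fst_le := h.dist_snd_le
  dist_snd_le := h.dist_fst_le
  dist_le_add p q := (h.dist_le_add p q).trans_eq (add_comm _ _)

theorem paddedRects_unifBounded
    (hle : ∀ p q, dist p q ≤ dist (f p) (f q) + dist (g p) (g q))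
    (hD : ∀ b : Fin m → ℕ+, (∀ j, b j ≤ N) → UnifBounded (D b))
    (h𝒱 : ∀ b : Fin m → ℕ+, (∀ j, b j ≤ N) → UnifBounded (𝒱 b)) (hl : ∀ j, 2 * l j < N) :
    UnifBounded (paddedRects f g D 𝒱 y₀ i l) := by
  have hb : ∀ j, (2 * l) j ≤ N := fun j => (hl j).le
  exact (rects_unifBounded hle (hD _ hb) (h𝒱 _ hb)).union <| rects_unifBounded hle
    (hD _ (forall_update_le hb (PNat.add_one_le_iff.2 (hl i))))
    (unifBounded_singleton_singleton y₀)

theorem rDisjoint_biUnion_paddedRects (hf : ∀ p q, dist (f p) (f q) ≤ dist p q)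
    (hg : ∀ p q, dist (g p) (g q) ≤ dist p q) {H : ℕ+} {r : ℝ} (hD : Translates N r D i (2 * l))
    (h𝒱 : ∀ v ≤ N, RDisjoint r (𝒱 (update (2 * l) i v))) (hH : 2 * H < N) :
    RDisjoint r (⋃ t ∈ Iic H, paddedRects f g D 𝒱 y₀ i (update l i t)) := by
  let 𝒲 : ℕ+ → Set (Set Y) := fun v => if Even (v : ℕ) then 𝒱 (update (2 * l) i v) else {{y₀}}
  have h𝒲 : ∀ v ∈ Iic N, RDisjoint r (𝒲 v) := by
    intro v hv
    by_cases hv' : Even (v : ℕ)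
    · simpa only [𝒲, if_pos hv'] using h𝒱 v hv
    · simpa only [𝒲, if_neg hv'] using rDisjoint_singleton r {y₀}
  refine (rDisjoint_biUnion_rects hf hg hD.2.2 hD.pairwiseDisjoint h𝒲).mono ?_
  refine iUnion₂_subset fun t ht => ?_
  have hlt : 2 * t < N := ((mul_le_mul_iff_left 2).2 ht).trans_lt hH
  rw [paddedRects_update]
  refine union_subset ?_ ?_
  · convert subset_biUnion_of_mem (u := fun v => rects f g (D (update (2 * l) i v)) (𝒲 v))
      (show 2 * t ∈ Iic N from hlt.le) using 2
    simp [𝒲]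
  · convert subset_biUnion_of_mem (u := fun v => rects f g (D (update (2 * l) i v)) (𝒲 v))
      (show 2 * t + 1 ∈ Iic N from PNat.add_one_le_iff.2 hlt) using 2
    simp [𝒲]

theorem paddedRects_translates (hsurj : Surjective fun p => (f p, g p))
    (hf : ∀ p q, dist (f p) (f q) ≤ dist p q) (hg : ∀ p q, dist (g p) (g q) ≤ dist p q)
    {H : ℕ+} {r : ℝ} (hD : ∀ b : Fin m → ℕ+, (∀ j, b j ≤ N) → Translates N r D i b)
    (h𝒱 : ∀ b : Fin m → ℕ+, (∀ j, b j ≤ N) → RDisjoint r (𝒱 b)) (hH : 2 * H < N)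
    (hl : ∀ j, 2 * l j < N) : Translates H r (paddedRects f g D 𝒱 y₀ i) i l := by
  have hb : ∀ j, (2 * l) j ≤ N := fun j => (hl j).le
  have hDl := hD _ hb
  have hlt {t : ℕ+} (ht : t ≤ H) : 2 * t < N := ((mul_le_mul_iff_left 2).2 ht).trans_lt hH
  refine ⟨fun t ht => ?_, fun t t' ht ht' htt => ?_,
    rDisjoint_biUnion_paddedRects hf hg hDl (fun v hv => h𝒱 _ (forall_update_le hb hv)) hH⟩
  · obtain ⟨x, U, hU, hx⟩ := hDl.1 _ (PNat.add_one_le_iff.2 (hlt ht))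
    obtain ⟨p, hp⟩ := hsurj (x, y₀)
    obtain ⟨rfl, hpy⟩ := Prod.mk.inj hp
    rw [paddedRects_update]
    exact ⟨p, sUnion_mono subset_union_right (mem_sUnion_rects hU rfl hx hpy)⟩
  · have hsub (s : ℕ+) : ⋃₀ paddedRects f g D 𝒱 y₀ i (update l i s) ⊆
        f ⁻¹' (⋃₀ D (update (2 * l) i (2 * s)) ∪ ⋃₀ D (update (2 * l) i (2 * s + 1))) := by
      rw [paddedRects_update, sUnion_union, preimage_union]
      exact union_subset_union sUnion_rects_subset sUnion_rects_subset
    exact ((disjoint_slots hDl.pairwiseDisjoint (hlt ht) (hlt ht') htt).preimage f).mono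
      (hsub t) (hsub t')

end Product

theorem exists_surjective_fin_succ (ι : Type*) [Finite ι] [Nonempty ι] :
    ∃ N : ℕ, ∃ e : Fin (N + 1) → ι, Surjective e := by
  obtain ⟨n, ⟨e⟩⟩ := Finite.exists_equiv_fin ι
  obtain ⟨N, rfl⟩ : ∃ N, n = N + 1 :=
    Nat.exists_eq_succ_of_ne_zero fun hn => (hn ▸ e (Classical.arbitrary ι)).elim0
  exact ⟨N, e.symm, e.symm.surjective⟩

def prodCIdx (n₁ n₂ : ℕ) : Fin (n₁ * n₂ + n₁ + n₂ + 1) ≃ Fin (n₁ + 1) × Fin (n₂ + 1) :=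
  (finCongr (by ring)).trans finProdFinEquiv.symm

section DirTile

variable {n₁ n₂ : ℕ} {F₁ F₂ : Fin m → ℕ}

abbrev ProdDIdx (n₁ n₂ : ℕ) (F₁ F₂ : Fin m → ℕ) (i : Fin m) : Type :=
  Fin (F₁ i + 1) × FamIdx n₂ F₂ ⊕ Fin (F₂ i + 1) × FamIdx n₁ F₁

variable (f : Z → X) (g : Z → Y) (C₁ : (Fin m → ℕ+) → Fin (n₁ + 1) → Set (Set X))
  (D₁ : (Fin m → ℕ+) → (i : Fin m) → Fin (F₁ i + 1) → Set (Set X))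
  (C₂ : (Fin m → ℕ+) → Fin (n₂ + 1) → Set (Set Y))
  (D₂ : (Fin m → ℕ+) → (i : Fin m) → Fin (F₂ i + 1) → Set (Set Y)) (x₀ : X) (y₀ : Y)

def prodDFam (i : Fin m) : ProdDIdx n₁ n₂ F₁ F₂ i → (Fin m → ℕ+) → Set (Set Z)
  | .inl (s, w) => paddedRects f g (fun b => D₁ b i s) (fun b => allFams (C₂ b) (D₂ b) w) y₀ i
  | .inr (s, w) => paddedRects g f (fun b => D₂ b i s) (fun b => allFams (C₁ b) (D₁ b) w) x₀ i

theorem iUnion_prodDFam_eq_univ {l : Fin m → ℕ+} {F : Fin m → ℕ}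
    {e : (i : Fin m) → Fin (F i + 1) → ProdDIdx n₁ n₂ F₁ F₂ i} (he : ∀ i, Surjective (e i))
    (hX : ⋃ w, ⋃₀ allFams (C₁ (2 * l)) (D₁ (2 * l)) w = univ)
    (hY : ⋃ w, ⋃₀ allFams (C₂ (2 * l)) (D₂ (2 * l)) w = univ) :
    (⋃ j, ⋃₀ rects f g (C₁ (2 * l) (prodCIdx n₁ n₂ j).1) (C₂ (2 * l) (prodCIdx n₁ n₂ j).2)) ∪
      (⋃ i, ⋃ s, ⋃₀ prodDFam f g C₁ D₁ C₂ D₂ x₀ y₀ i (e i s) l) = univ := by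
  refine eq_univ_of_forall fun p => ?_
  obtain ⟨w₁, U, hU, hpU⟩ := mem_iUnion.1 (hX ▸ mem_univ (f p))
  obtain ⟨w₂, V, hV, hpV⟩ := mem_iUnion.1 (hY ▸ mem_univ (g p))
  rcases w₁ with j₁ | ⟨i, s₁⟩
  · rcases w₂ with j₂ | ⟨i, s₂⟩
    · refine Or.inl (mem_iUnion.2 ⟨(prodCIdx n₁ n₂).symm (j₁, j₂), ?_⟩)
      rw [Equiv.apply_symm_apply]
      exact mem_sUnion_rects hU hV hpU hpV
    · obtain ⟨s, hs⟩ := he i (.inr (s₂, .inl j₁))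
      refine Or.inr (mem_iUnion₂.2 ⟨i, s, ?_⟩)
      simp only [hs, prodDFam]
      exact subset_sUnion_paddedRects (mem_sUnion_rects hV hU hpV hpU)
  · obtain ⟨s, hs⟩ := he i (.inl (s₁, w₂))
    refine Or.inr (mem_iUnion₂.2 ⟨i, s, ?_⟩)
    simp only [hs, prodDFam]
    exact subset_sUnion_paddedRects (mem_sUnion_rects hU hV hpU hpV)

variable [MetricSpace X] [MetricSpace Y] [MetricSpace Z]

theorem prodDFam_spec {f : Z → X} {g : Z → Y} (hfg : ProductCoords f g) {k' : Fin (m + 1) → ℕ+}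
    {N H : ℕ+} {r : ℝ} {l : Fin m → ℕ+} {i : Fin m}
    (hX : IsDTUTTiling (fun _ => N) k' C₁ D₁) (hY : IsDTUTTiling (fun _ => N) k' C₂ D₂)
    (hr : ∀ j, r ≤ ((k' j : ℕ) : ℝ)) (hH : 2 * H < N) (hl : ∀ j, 2 * l j < N)
    (x : ProdDIdx n₁ n₂ F₁ F₂ i) :
    UnifBounded (prodDFam f g C₁ D₁ C₂ D₂ x₀ y₀ i x l) ∧
      Translates H r (prodDFam f g C₁ D₁ C₂ D₂ x₀ y₀ i x) i l := by
  rcases x with ⟨s, w⟩ | ⟨s, w⟩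
  · exact ⟨paddedRects_unifBounded hfg.dist_le_add (fun b hb => (hX b hb).1.2.1 i s)
        (fun b hb => (hY b hb).1.unifBounded_allFams w) hl,
      paddedRects_translates hfg.surjective hfg.dist_fst_le hfg.dist_snd_le
        (fun b hb => ((hX b hb).2 i s).of_le (hr _))
        (fun b hb => (hY b hb).1.rDisjoint_allFams hr w) hH hl⟩
  · exact ⟨paddedRects_unifBounded hfg.swap.dist_le_add (fun b hb => (hY b hb).1.2.1 i s)
        (fun b hb => (hX b hb).1.unifBounded_allFams w) hl,
      paddedRects_translates hfg.swap.surjective hfg.dist_snd_le hfg.dist_fst_le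
        (fun b hb => ((hY b hb).2 i s).of_le (hr _))
        (fun b hb => (hX b hb).1.rDisjoint_allFams hr w) hH hl⟩

end DirTile

theorem ProductCoords.dtut [MetricSpace X] [MetricSpace Y] [MetricSpace Z] [Nonempty X]
    [Nonempty Y] {f : Z → X} {g : Z → Y} (hfg : ProductCoords f g) {n₁ n₂ : ℕ}
    (hX : DTUT X m n₁) (hY : DTUT Y m n₂) : DTUT Z m (n₁ * n₂ + n₁ + n₂) := by
  obtain ⟨x₀⟩ : Nonempty X := inferInstance
  obtain ⟨y₀⟩ : Nonempty Y := inferInstance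
  obtain ⟨F₁, hX⟩ := dtut_iff.1 hX
  obtain ⟨F₂, hY⟩ := dtut_iff.1 hY
  choose F e he using fun i => exists_surjective_fin_succ (ProdDIdx n₁ n₂ F₁ F₂ i)
  refine dtut_iff.2 ⟨F, fun h k hk => ?_⟩
  obtain ⟨M, hM⟩ := Finite.exists_le fun j => 2 * h (k j)
  have hN : ∀ j, 2 * h (k j) < M + 1 := fun j => (hM j).trans_lt (PNat.lt_add_right M 1)
  obtain ⟨C₁, D₁, hX⟩ := hX (fun _ => M + 1) _ (hk.add_const (k (Fin.last m)))
  obtain ⟨C₂, D₂, hY⟩ := hY (fun _ => M + 1) _ (hk.add_const (k (Fin.last m)))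
  have hk' (j j' : Fin (m + 1)) : ((k j : ℕ) : ℝ) ≤ ((k j' + k (Fin.last m) : ℕ+) : ℕ) := by
    have := PNat.coe_le_coe _ _ |>.2 (hk.monotone (Fin.le_last j))
    push_cast
    exact_mod_cast this.trans (Nat.le_add_left _ _)
  refine ⟨fun l j => rects f g (C₁ (2 * l) (prodCIdx n₁ n₂ j).1) (C₂ (2 * l) (prodCIdx n₁ n₂ j).2),
    fun l i s => prodDFam f g C₁ D₁ C₂ D₂ x₀ y₀ i (e i s) l,
    fun l hl => ?_⟩
  have h2l (j : Fin m) : 2 * l j < M + 1 := ((mul_le_mul_iff_left 2).2 (hl j)).trans_lt (hN _)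
  obtain ⟨hXl, -⟩ := hX (2 * l) fun j => (h2l j).le
  obtain ⟨hYl, -⟩ := hY (2 * l) fun j => (h2l j).le
  have hdir (i : Fin m) (s : Fin (F i + 1)) :=
    prodDFam_spec C₁ D₁ C₂ D₂ x₀ y₀ hfg hX hY (hk' i.succ) (hN i.succ) h2l (e i s)
  refine ⟨⟨fun j => rects_unifBounded hfg.dist_le_add (hXl.1 _) (hYl.1 _),
    fun i s => (hdir i s).1,
    fun j => rects_rDisjoint hfg.dist_fst_le hfg.dist_snd_le ((hXl.2.2.1 _).of_le (hk' 0 0))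
      ((hYl.2.2.1 _).of_le (hk' 0 0)),
    fun i s => (hdir i s).2.rDisjoint (hl i),
    iUnion_prodDFam_eq_univ f g C₁ D₁ C₂ D₂ x₀ y₀ he hXl.iUnion_allFams hYl.iUnion_allFams⟩,
    fun i s => (hdir i s).2⟩

end APC

theorem prod_dtut_general {Γ₁ Γ₂ : Type*} [Group Γ₁] [Group Γ₂]
    [MetricSpace Γ₁] [MetricSpace Γ₂]
    (m n₁ n₂ : ℕ)
    (h₁ : DTUT Γ₁ m n₁) (h₂ : DTUT Γ₂ m n₂)
    (dP : MetricSpace (Γ₁ × Γ₂))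
    (hdist : ∀ a b : Γ₁ × Γ₂,
      @dist _ dP.toPseudoMetricSpace.toDist a b = dist a.1 b.1 + dist a.2 b.2) :
    @DTUT (Γ₁ × Γ₂) dP m (n₁ * n₂ + n₁ + n₂) := by
  have hcoords : @ProductCoords _ _ _ _ _ dP Prod.fst Prod.snd :=
    { surjective := fun p => ⟨p, rfl⟩
      dist_fst_le := fun p q => by rw [hdist]; linarith [dist_nonneg (x := p.2) (y := q.2)]
      dist_snd_le := fun p q => by rw [hdist]; linarith [dist_nonneg (x := p.1) (y := q.1)]
      dist_le_add := fun p q => (hdist p q).le }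
  exact @ProductCoords.dtut _ _ _ m _ _ dP _ _ _ _ hcoords n₁ n₂ h₁ h₂

/-- If `Γ₁`, `Γ₂` are groups with proper left-invariant metrics having the
`(m,n₁)`- and `(m,n₂)`-DTUT properties, then `Γ₁ × Γ₂` with the sum metric has the
`(m, n₁·n₂ + n₁ + n₂)`-DTUT property. -/
theorem prod_dtut {Γ₁ Γ₂ : Type*} [Group Γ₁] [Group Γ₂]
    [MetricSpace Γ₁] [MetricSpace Γ₂]
    (m n₁ n₂ : ℕ) (hm : 0 < m) (hn₁ : 0 < n₁) (hn₂ : 0 < n₂)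
    (h₁proper : ProperMet Γ₁) (h₁inv : LeftInvariant Γ₁)
    (h₂proper : ProperMet Γ₂) (h₂inv : LeftInvariant Γ₂)
    (h₁ : DTUT Γ₁ m n₁) (h₂ : DTUT Γ₂ m n₂)
    (dP : MetricSpace (Γ₁ × Γ₂))
    (hdist : ∀ a b : Γ₁ × Γ₂,
      @dist _ dP.toPseudoMetricSpace.toDist a b = dist a.1 b.1 + dist a.2 b.2) :
    @DTUT (Γ₁ × Γ₂) dP m (n₁ * n₂ + n₁ + n₂) :=
  prod_dtut_general m n₁ n₂ h₁ h₂ dP hdist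
end

section
/- The integer Heisenberg group H_3(ℤ), consisting of 3×3 upper unitriangular matrices with integer entries, equipped with the word metric of the generating set {a,b,c}, where a, b, c are the unitriangular matrices whose single nonzero off-diagonal entry is a 1 in position (1,2), (2,3), (1,3) respectively, has the (2,0)-DTUT property. -/
open Metric Set Function

namespace APC

abbrev Mat3 := Matrix (Fin 3) (Fin 3) ℤ

/-- A 3×3 integer matrix is upper unitriangular if it has `1`s on the diagonal and `0`s
below the diagonal. -/
def IsUnitriangular (A : Mat3) : Prop :=
  A 0 0 = 1 ∧ A 1 1 = 1 ∧ A 2 2 = 1 ∧ A 1 0 = 0 ∧ A 2 0 = 0 ∧ A 2 1 = 0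

/-- The integer Heisenberg group `H₃(ℤ)`: the group of 3×3 upper unitriangular integer
matrices, realized as a subgroup of the units of the matrix ring. -/
def Heisenberg : Subgroup (Mat3)ˣ where
  carrier := {A | IsUnitriangular (A : Mat3)}
  one_mem' := by
    constructor <;> simp [Matrix.one_apply]
  mul_mem' := by
    intro A B hA hB
    obtain ⟨a00, a11, a22, a10, a20, a21⟩ := hA
    obtain ⟨b00, b11, b22, b10, b20, b21⟩ := hB
    refine ⟨?_, ?_, ?_, ?_, ?_, ?_⟩ <;>
      simp [Units.val_mul, Matrix.mul_apply, Fin.sum_univ_three,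
        a00, a11, a22, a10, a20, a21, b00, b11, b22, b10, b20, b21]
  inv_mem' := by
    intro A hA
    obtain ⟨a00, a11, a22, a10, a20, a21⟩ := hA
    set B : Mat3 := ((A⁻¹ : (Mat3)ˣ) : Mat3) with hB
    have h : B * (A : Mat3) = 1 := by
      rw [hB, ← Units.val_mul, inv_mul_cancel, Units.val_one]
    have e : ∀ i j : Fin 3, (B * (A : Mat3)) i j = (1 : Mat3) i j :=
      fun i j => by rw [h]
    have h20 : B 2 0 = 0 := by
      have := e 2 0
      simpa [Matrix.mul_apply, Fin.sum_univ_three, a00, a10, a20, Matrix.one_apply] using this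
    have h21 : B 2 1 = 0 := by
      have := e 2 1
      simpa [Matrix.mul_apply, Fin.sum_univ_three, a11, a10, a21, h20, Matrix.one_apply] using this
    have h22 : B 2 2 = 1 := by
      have := e 2 2
      simpa [Matrix.mul_apply, Fin.sum_univ_three, a22, h20, h21, Matrix.one_apply] using this
    have h10 : B 1 0 = 0 := by
      have := e 1 0
      simpa [Matrix.mul_apply, Fin.sum_univ_three, a00, a10, a20, Matrix.one_apply] using this
    have h11 : B 1 1 = 1 := by
      have := e 1 1
      simpa [Matrix.mul_apply, Fin.sum_univ_three, a11, a21, h10, Matrix.one_apply] using this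
    have h00 : B 0 0 = 1 := by
      have := e 0 0
      simpa [Matrix.mul_apply, Fin.sum_univ_three, a00, a10, a20, Matrix.one_apply] using this
    exact ⟨h00, h11, h22, h10, h20, h21⟩

end APC
namespace APC

/-- The generator `a` (a `1` in position (1,2)). -/
def aUnit : (Mat3)ˣ :=
  ⟨!![1, 1, 0; 0, 1, 0; 0, 0, 1], !![1, -1, 0; 0, 1, 0; 0, 0, 1], by decide, by decide⟩

/-- The generator `b` (a `1` in position (2,3)). -/
def bUnit : (Mat3)ˣ :=
  ⟨!![1, 0, 0; 0, 1, 1; 0, 0, 1], !![1, 0, 0; 0, 1, -1; 0, 0, 1], by decide, by decide⟩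

/-- The generator `c` (a `1` in position (1,3)). -/
def cUnit : (Mat3)ˣ :=
  ⟨!![1, 0, 1; 0, 1, 0; 0, 0, 1], !![1, 0, -1; 0, 1, 0; 0, 0, 1], by decide, by decide⟩

def aElt : Heisenberg := ⟨aUnit, by constructor <;> decide⟩
def bElt : Heisenberg := ⟨bUnit, by constructor <;> decide⟩
def cElt : Heisenberg := ⟨cUnit, by constructor <;> decide⟩

end APC

/-!
In coordinates `g = (x, y, z)` (the entries `(1,2)`, `(2,3)`, `(1,3)`) the product is
`(x, y, z) (x', y', z') = (x + x', y + y', z + z' + x y')`. A word of length `n` changes `x` and `y`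
by at most `n` and `z` by at most `n²`, while `(x, y, z)` is represented by a word of length
`|x| + |y| + |z - x y|`.

Let `B = k₂`, `T₁ = h k₁`, `T₂ = h k₂`. Cut the `x`-axis into walls of width `B` starting at
`(j (T₁ + 1) + t₁) · 2B` and tiles between consecutive walls. Inside an `x`-tile cut the `y`-axis
the same way with shift `t₂`, and inside an `x`-`y` tile cut the sheared coordinate `z - u y`
(`u` the start of the `x`-column) the same way with shift `t₂`, at a scale `Q` exceeding the amount
by which that coordinate can vary between points at distance `< B` in one column. Walls of unbounded extent
are cut further into blocks coloured by parity. Points at distance `< B` in pieces of one family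
then lie in one piece: the bricks form the single `k₀`-disjoint family, the `x`-walls four families
(parities of the `y`- and `z`-blocks), the `y`-walls two (parity of the `z`-block), the `z`-walls
one. Changing `t₁` or `t₂` slides the walls by multiples of `2B` or `2Q` without ever bringing two
of them within `B`, which is the required disjointness under translation.
-/

namespace APC

section Families

variable {X : Type*} [MetricSpace X]

lemma RDisjoint.anti {r r' : ℝ} {𝒰 : Set (Set X)} (h : RDisjoint r 𝒰) (hr : r' ≤ r) :
    RDisjoint r' 𝒰 :=
  fun U hU V hV hUV x hx y hy => hr.trans (h U hU V hV hUV x hx y hy)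

lemma RDisjoint.subset {r : ℝ} {𝒰 𝒱 : Set (Set X)} (h : RDisjoint r 𝒰) (h𝒱 : 𝒱 ⊆ 𝒰) :
    RDisjoint r 𝒱 :=
  fun U hU V hV => h U (h𝒱 hU) V (h𝒱 hV)

lemma rDisjoint_image {ι : Type*} {r : ℝ} {P : ι → Set X} {K : Set ι}
    (h : ∀ i ∈ K, ∀ i' ∈ K, ∀ x ∈ P i, ∀ y ∈ P i', dist x y < r → i = i') :
    RDisjoint r (P '' K) := by
  rintro _ ⟨i, hi, rfl⟩ _ ⟨i', hi', rfl⟩ hne x hx y hy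
  by_contra! hxy
  exact hne (congrArg P (h i hi i' hi' x hx y hy hxy))

def IsDisjointTranslation (r : ℝ) (T : ℕ+) (G : ℕ+ → Set (Set X)) : Prop :=
  (∀ t : ℕ+, t ≤ T → (⋃₀ G t).Nonempty) ∧
  (∀ t t' : ℕ+, t ≤ T → t' ≤ T → t ≠ t' → Disjoint (⋃₀ G t) (⋃₀ G t')) ∧
  RDisjoint r (⋃ t ∈ {t : ℕ+ | t ≤ T}, G t)

variable {r : ℝ} {T : ℕ+} {G : ℕ+ → Set (Set X)}

lemma IsDisjointTranslation.anti (h : IsDisjointTranslation r T G) {r' : ℝ} (hr : r' ≤ r) :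
    IsDisjointTranslation r' T G :=
  ⟨h.1, h.2.1, h.2.2.anti hr⟩

lemma IsDisjointTranslation.rDisjoint (h : IsDisjointTranslation r T G) {t : ℕ+} (ht : t ≤ T) :
    RDisjoint r (G t) :=
  h.2.2.subset (subset_biUnion_of_mem (u := G) ht)

lemma isDisjointTranslation_image {ι : Type*} (hr : 0 < r) {P : ℕ+ → ι → Set X} {K : Set ι}
    (hne : ∀ t ≤ T, ∃ i ∈ K, (P t i).Nonempty)
    (hsep : ∀ t ≤ T, ∀ t' ≤ T, ∀ i ∈ K, ∀ i' ∈ K, ∀ x ∈ P t i, ∀ y ∈ P t' i',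
      dist x y < r → t = t' ∧ i = i') :
    IsDisjointTranslation r T (fun t => P t '' K) := by
  refine ⟨fun t ht => ?_, fun t t' ht ht' htt' => ?_, ?_⟩
  · obtain ⟨i, hi, x, hx⟩ := hne t ht
    exact ⟨x, _, mem_image_of_mem _ hi, hx⟩
  · rw [Set.disjoint_left]
    rintro x ⟨_, ⟨i, hi, rfl⟩, hx⟩ ⟨_, ⟨i', hi', rfl⟩, hx'⟩
    exact htt' (hsep t ht t' ht' i hi i' hi' x hx x hx' (by rwa [dist_self])).1
  · intro U hU V hV hUV x hx y hy
    obtain ⟨t, ht, i, hi, rfl⟩ := mem_iUnion₂.mp hU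
    obtain ⟨t', ht', i', hi', rfl⟩ := mem_iUnion₂.mp hV
    by_contra! hxy
    obtain ⟨rfl, rfl⟩ := hsep t ht t' ht' i hi i' hi' x hx y hy hxy
    exact hUV rfl

end Families

section Strips

/- Walls of width `w` start at `(j (T + 1) + t) · 2w`; for `0 ≤ t ≤ T` distinct pairs `(j, t)` give
distinct multiples of `2w`, so walls of different shifts `t` never come within `w` of each other. -/
def wallStart (w T j t : ℤ) : ℤ := (j * (T + 1) + t) * (2 * w)

def wallIco (w T j t : ℤ) : Set ℤ := Ico (wallStart w T j t) (wallStart w T j t + w)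

def tileIco (w T j t : ℤ) : Set ℤ := Ico (wallStart w T j t + w) (wallStart w T (j + 1) t)

def blockIco (w q : ℤ) : Set ℤ := Ico (q * w) (q * w + w)

variable {w T : ℤ}

lemma wallStart_add_one (w T j t : ℤ) :
    wallStart w T (j + 1) t = wallStart w T j t + (T + 1) * (2 * w) := by
  unfold wallStart
  ring

lemma abs_sub_lt_of_abs_mul_sub_lt {a b k N : ℤ} (hN : 0 < N) (h : |a * N - b * N| < k * N) :
    |a - b| < k := by
  rw [← sub_mul, abs_mul, abs_of_pos hN] at h
  exact lt_of_mul_lt_mul_right h hN.le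

lemma eq_of_mem_blockIco {x x' q q' : ℤ} (hx : x ∈ blockIco w q) (hx' : x' ∈ blockIco w q')
    (hq : q % 2 = q' % 2) (hxx : |x - x'| < w) : q = q' := by
  obtain ⟨h₁, h₂⟩ := hx
  obtain ⟨h₁', h₂'⟩ := hx'
  have hw : 0 < w := (abs_nonneg _).trans_lt hxx
  rw [abs_lt] at hxx
  have h := abs_sub_lt_of_abs_mul_sub_lt (a := q) (b := q') (k := 2) hw
    (abs_lt.mpr ⟨by linarith, by linarith⟩)
  rw [abs_lt] at h
  omega

lemma eq_of_mem_wallIco {x x' j j' t t' : ℤ} (ht : 0 ≤ t ∧ t ≤ T) (ht' : 0 ≤ t' ∧ t' ≤ T)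
    (hx : x ∈ wallIco w T j t) (hx' : x' ∈ wallIco w T j' t') (hxx : |x - x'| < w) :
    j = j' ∧ t = t' := by
  obtain ⟨h₁, h₂⟩ := hx
  obtain ⟨h₁', h₂'⟩ := hx'
  have hw : 0 < w := (abs_nonneg _).trans_lt hxx
  rw [abs_lt] at hxx
  unfold wallStart at h₁ h₂ h₁' h₂'
  have hn := abs_sub_lt_of_abs_mul_sub_lt (a := j * (T + 1) + t) (b := j' * (T + 1) + t') (k := 1)
    (by linarith : 0 < 2 * w)
    (abs_lt.mpr ⟨by linarith, by linarith⟩)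
  rw [abs_lt] at hn
  have hn' : j * (T + 1) + t = j' * (T + 1) + t' := by omega
  have hj := abs_sub_lt_of_abs_mul_sub_lt (a := j) (b := j') (k := 1) (by linarith : 0 < T + 1)
    (abs_lt.mpr ⟨by linarith, by linarith⟩)
  rw [abs_lt] at hj
  obtain rfl : j = j' := by omega
  exact ⟨rfl, by linarith⟩

lemma eq_of_mem_tileIco {x x' j j' t : ℤ} (hx : x ∈ tileIco w T j t) (hx' : x' ∈ tileIco w T j' t)
    (hxx : |x - x'| < w) : j = j' := by
  rw [tileIco, wallStart_add_one] at hx hx'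
  obtain ⟨h₁, h₂⟩ := hx
  obtain ⟨h₁', h₂'⟩ := hx'
  have hw : 0 < w := (abs_nonneg _).trans_lt hxx
  rw [abs_lt] at hxx
  unfold wallStart at h₁ h₂ h₁' h₂'
  have h := abs_sub_lt_of_abs_mul_sub_lt (a := j) (b := j') (k := 1)
    (by linarith : 0 < (T + 1) * (2 * w)) (abs_lt.mpr ⟨by linarith, by linarith⟩)
  rw [abs_lt] at h
  omega

lemma exists_mem_wallIco_or_tileIco (hw : 0 < w) (hT : 0 ≤ T) (t x : ℤ) :
    ∃ j, x ∈ wallIco w T j t ∨ x ∈ tileIco w T j t := by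
  have hN : 0 < (T + 1) * (2 * w) := by positivity
  set j := (x - t * (2 * w)) / ((T + 1) * (2 * w))
  have hdiv := Int.emod_add_mul_ediv (x - t * (2 * w)) ((T + 1) * (2 * w))
  have h₁ := Int.emod_nonneg (x - t * (2 * w)) hN.ne'
  have h₂ := Int.emod_lt_of_pos (x - t * (2 * w)) hN
  refine ⟨j, ?_⟩
  simp only [wallIco, tileIco, wallStart_add_one, mem_Ico]
  unfold wallStart
  by_cases h : (x - t * (2 * w)) % ((T + 1) * (2 * w)) < w
  · exact Or.inl ⟨by linarith, by linarith⟩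
  · exact Or.inr ⟨by linarith, by linarith⟩

lemma exists_mem_blockIco (hw : 0 < w) (x : ℤ) : ∃ q, x ∈ blockIco w q := by
  have hdiv := Int.emod_add_mul_ediv x w
  have h₁ := Int.emod_nonneg x hw.ne'
  have h₂ := Int.emod_lt_of_pos x hw
  exact ⟨x / w, by linarith, by linarith⟩

lemma wallIco_subset (hw : 0 ≤ w) (hT : 0 ≤ T) (j t : ℤ) :
    wallIco w T j t ⊆ Ico (wallStart w T j t) (wallStart w T j t + (T + 1) * (2 * w)) :=
  Ico_subset_Ico_right (by nlinarith)

lemma tileIco_subset (hw : 0 ≤ w) (j t : ℤ) :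
    tileIco w T j t ⊆ Ico (wallStart w T j t) (wallStart w T j t + (T + 1) * (2 * w)) := by
  rw [tileIco, wallStart_add_one]
  exact Ico_subset_Ico_left (by linarith)

lemma blockIco_subset (hw : 0 ≤ w) (hT : 0 ≤ T) (q : ℤ) :
    blockIco w q ⊆ Ico (q * w) (q * w + (T + 1) * (2 * w)) :=
  Ico_subset_Ico_right (by nlinarith)

lemma wallIco_nonempty (hw : 0 < w) (j t : ℤ) : (wallIco w T j t).Nonempty :=
  nonempty_Ico.mpr (by linarith)

lemma tileIco_nonempty (hw : 0 < w) (hT : 0 ≤ T) (j t : ℤ) : (tileIco w T j t).Nonempty := by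
  rw [tileIco, wallStart_add_one]
  exact nonempty_Ico.mpr (by nlinarith)

lemma blockIco_nonempty (hw : 0 < w) (q : ℤ) : (blockIco w q).Nonempty :=
  nonempty_Ico.mpr (by linarith)

end Strips

section WordMetric

def IsWordMetric (G : Type*) [Group G] [MetricSpace G] (S : Set G) : Prop :=
  ∀ g h : G, dist g h = wordLength S (g⁻¹ * h)

variable {G : Type*} [Group G] {S : Set G}

lemma wordLength_le_length {L : List G} (hL : ∀ x ∈ L, x ∈ S ∨ x⁻¹ ∈ S) :
    wordLength S L.prod ≤ L.length := by
  unfold wordLength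
  exact Nat.sInf_le ⟨L, hL, rfl, rfl⟩

lemma exists_word_length_eq_wordLength {g : G}
    (h : ∃ L : List G, (∀ x ∈ L, x ∈ S ∨ x⁻¹ ∈ S) ∧ L.prod = g) :
    ∃ L : List G, (∀ x ∈ L, x ∈ S ∨ x⁻¹ ∈ S) ∧ L.prod = g ∧ L.length = wordLength S g := by
  obtain ⟨L, hL, rfl⟩ := h
  have : wordLength S L.prod ∈ {n | ∃ L' : List G, (∀ x ∈ L', x ∈ S ∨ x⁻¹ ∈ S) ∧
      L'.prod = L.prod ∧ L'.length = n} := Nat.sInf_mem ⟨_, L, hL, rfl, rfl⟩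
  exact this

lemma exists_word_zpow {s : G} (hs : s ∈ S) (n : ℤ) :
    ∃ L : List G, (∀ x ∈ L, x ∈ S ∨ x⁻¹ ∈ S) ∧ L.prod = s ^ n ∧ L.length = n.natAbs := by
  rcases Int.natAbs_eq n with hn | hn
  · refine ⟨List.replicate n.natAbs s, ?_, ?_, List.length_replicate⟩
    · simp +contextual [List.mem_replicate, hs]
    · rw [List.prod_replicate, hn, zpow_natCast, Int.natAbs_natCast]
  · refine ⟨List.replicate n.natAbs s⁻¹, ?_, ?_, List.length_replicate⟩
    · simp +contextual [List.mem_replicate, hs]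
    · rw [List.prod_replicate, inv_pow, hn, zpow_neg, zpow_natCast, Int.natAbs_neg,
        Int.natAbs_natCast]

end WordMetric

namespace Heisenberg

def mk (u v w : ℤ) : Heisenberg :=
  ⟨⟨!![1, u, w; 0, 1, v; 0, 0, 1], !![1, -u, u * v - w; 0, 1, -v; 0, 0, 1],
    by ext i j; fin_cases i <;> fin_cases j <;> simp [Matrix.mul_apply, Fin.sum_univ_three]; ring,
    by ext i j; fin_cases i <;> fin_cases j <;> simp [Matrix.mul_apply, Fin.sum_univ_three]; ring⟩,
    by simp [Heisenberg, IsUnitriangular]⟩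

def xc (g : Heisenberg) : ℤ := ((g : Mat3ˣ) : Mat3) 0 1
def yc (g : Heisenberg) : ℤ := ((g : Mat3ˣ) : Mat3) 1 2
def zc (g : Heisenberg) : ℤ := ((g : Mat3ˣ) : Mat3) 0 2

@[simp] lemma xc_mk (u v w : ℤ) : xc (mk u v w) = u := rfl
@[simp] lemma yc_mk (u v w : ℤ) : yc (mk u v w) = v := rfl
@[simp] lemma zc_mk (u v w : ℤ) : zc (mk u v w) = w := rfl

lemma mk_xc_yc_zc (g : Heisenberg) : mk (xc g) (yc g) (zc g) = g := by
  obtain ⟨h00, h11, h22, h10, h20, h21⟩ := g.2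
  ext i j
  fin_cases i <;> fin_cases j <;> simp [mk, xc, yc, zc, h00, h11, h22, h10, h20, h21]

lemma mk_mul_mk (u v w u' v' w' : ℤ) :
    mk u v w * mk u' v' w' = mk (u + u') (v + v') (w + w' + u * v') := by
  ext i j
  fin_cases i <;> fin_cases j <;> simp [mk, Matrix.mul_apply, Fin.sum_univ_three] <;> ring

lemma mk_zero : mk 0 0 0 = 1 := by
  ext i j
  fin_cases i <;> fin_cases j <;> simp [mk]

lemma mk_inv (u v w : ℤ) : (mk u v w)⁻¹ = mk (-u) (-v) (u * v - w) := by
  rw [inv_eq_iff_mul_eq_one, mk_mul_mk, ← mk_zero]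
  congr 1 <;> ring

lemma coords_mul (g h : Heisenberg) :
    xc (g * h) = xc g + xc h ∧ yc (g * h) = yc g + yc h ∧
      zc (g * h) = zc g + zc h + xc g * yc h := by
  rw [← mk_xc_yc_zc g, ← mk_xc_yc_zc h, mk_mul_mk]
  simp

lemma coords_inv_mul (g h : Heisenberg) :
    xc (g⁻¹ * h) = xc h - xc g ∧ yc (g⁻¹ * h) = yc h - yc g ∧
      zc (g⁻¹ * h) = zc h - zc g - xc g * (yc h - yc g) := by
  rw [← mk_xc_yc_zc g, ← mk_xc_yc_zc h, mk_inv, mk_mul_mk]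
  simp only [xc_mk, yc_mk, zc_mk]
  refine ⟨by ring, by ring, by ring⟩

lemma mk_zpow {u v : ℤ} (huv : u * v = 0) (w n : ℤ) :
    mk u v w ^ n = mk (n * u) (n * v) (n * w) := by
  induction n using Int.induction_on with
  | zero => simp [mk_zero]
  | succ n ih =>
    rw [zpow_add_one, ih, mk_mul_mk]
    congr 1
    · ring
    · ring
    · linear_combination (n : ℤ) * huv
  | pred n ih =>
    rw [zpow_sub_one, ih, mk_inv, mk_mul_mk]
    congr 1
    · ring
    · ring
    · linear_combination ((n : ℤ) + 1) * huv

lemma aElt_eq : aElt = mk 1 0 0 := by ext i j; fin_cases i <;> fin_cases j <;> rfl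
lemma bElt_eq : bElt = mk 0 1 0 := by ext i j; fin_cases i <;> fin_cases j <;> rfl
lemma cElt_eq : cElt = mk 0 0 1 := by ext i j; fin_cases i <;> fin_cases j <;> rfl

abbrev gens : Set Heisenberg := {aElt, bElt, cElt}

lemma exists_word_mk (u v w : ℤ) :
    ∃ L : List Heisenberg, (∀ x ∈ L, x ∈ gens ∨ x⁻¹ ∈ gens) ∧ L.prod = mk u v w ∧
      L.length = u.natAbs + v.natAbs + (w - u * v).natAbs := by
  obtain ⟨La, hLa, hpa, hla⟩ := exists_word_zpow (S := gens) (s := aElt) (by simp) u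
  obtain ⟨Lb, hLb, hpb, hlb⟩ := exists_word_zpow (S := gens) (s := bElt) (by simp) v
  obtain ⟨Lc, hLc, hpc, hlc⟩ := exists_word_zpow (S := gens) (s := cElt) (by simp) (w - u * v)
  refine ⟨La ++ Lb ++ Lc, ?_, ?_, by simp only [List.length_append, hla, hlb, hlc]⟩
  · simp only [List.mem_append]
    rintro x ((hx | hx) | hx)
    exacts [hLa x hx, hLb x hx, hLc x hx]
  · rw [List.prod_append, List.prod_append, hpa, hpb, hpc, aElt_eq, bElt_eq, cElt_eq,
      mk_zpow (by ring), mk_zpow (by ring), mk_zpow (by ring), mk_mul_mk, mk_mul_mk]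
    congr 1 <;> ring

lemma abs_coords_le_of_mem_gens {s : Heisenberg} (hs : s ∈ gens ∨ s⁻¹ ∈ gens) :
    |xc s| ≤ 1 ∧ |yc s| ≤ 1 ∧ |zc s| ≤ 1 := by
  have key : ∀ t ∈ gens, (|xc t| ≤ 1 ∧ |yc t| ≤ 1 ∧ |zc t| ≤ 1) ∧
      |xc t⁻¹| ≤ 1 ∧ |yc t⁻¹| ≤ 1 ∧ |zc t⁻¹| ≤ 1 := by
    rintro t (rfl | rfl | rfl) <;> simp [aElt_eq, bElt_eq, cElt_eq, mk_inv]
  rcases hs with hs | hs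
  · exact (key s hs).1
  · simpa using (key _ hs).2
lemma exists_word (g : Heisenberg) :
    ∃ L : List Heisenberg, (∀ x ∈ L, x ∈ gens ∨ x⁻¹ ∈ gens) ∧ L.prod = g := by
  obtain ⟨L, hL, hprod, -⟩ := exists_word_mk (xc g) (yc g) (zc g)
  exact ⟨L, hL, hprod.trans (mk_xc_yc_zc g)⟩

lemma abs_coords_prod_le (L : List Heisenberg) (hL : ∀ s ∈ L, s ∈ gens ∨ s⁻¹ ∈ gens) :
    |xc L.prod| ≤ L.length ∧ |yc L.prod| ≤ L.length ∧ |zc L.prod| ≤ (L.length : ℤ) ^ 2 := by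
  induction L with
  | nil => simp [← mk_zero]
  | cons s L ih =>
    obtain ⟨hx, hy, hz⟩ := abs_coords_le_of_mem_gens (hL s List.mem_cons_self)
    obtain ⟨ihx, ihy, ihz⟩ := ih fun t ht => hL t (List.mem_cons_of_mem s ht)
    obtain ⟨ex, ey, ez⟩ := coords_mul s L.prod
    simp only [List.prod_cons, List.length_cons, ex, ey, ez, Nat.cast_add, Nat.cast_one]
    have hxy : |xc s * yc L.prod| ≤ L.length := by
      rw [abs_mul]
      nlinarith [abs_nonneg (xc s), abs_nonneg (yc L.prod)]
    refine ⟨(abs_add_le _ _).trans (by linarith), (abs_add_le _ _).trans (by linarith), ?_⟩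
    calc |zc s + zc L.prod + xc s * yc L.prod|
        ≤ |zc s| + |zc L.prod| + |xc s * yc L.prod| := abs_add_three _ _ _
      _ ≤ ((L.length : ℤ) + 1) ^ 2 := by nlinarith

/- `shear u g` is the `z`-coordinate of `a⁻ᵘ g`. -/
def shear (u : ℤ) (g : Heisenberg) : ℤ := zc g - u * yc g

lemma zc_inv_mul_eq_shear (u : ℤ) (g h : Heisenberg) :
    zc (g⁻¹ * h) = shear u h - shear u g - (xc g - u) * (yc h - yc g) := by
  rw [(coords_inv_mul g h).2.2, shear, shear]
  ring

def box (u : ℤ) (I J K : Set ℤ) : Set Heisenberg := {g | xc g ∈ I ∧ yc g ∈ J ∧ shear u g ∈ K}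

lemma box_mono {u : ℤ} {I I' J J' K K' : Set ℤ} (hI : I ⊆ I') (hJ : J ⊆ J') (hK : K ⊆ K') :
    box u I J K ⊆ box u I' J' K' :=
  fun _ ⟨hx, hy, hz⟩ => ⟨hI hx, hJ hy, hK hz⟩

lemma box_nonempty {u : ℤ} {I J K : Set ℤ} (hI : I.Nonempty) (hJ : J.Nonempty)
    (hK : K.Nonempty) : (box u I J K).Nonempty := by
  obtain ⟨a, ha⟩ := hI
  obtain ⟨b, hb⟩ := hJ
  obtain ⟨c, hc⟩ := hK
  exact ⟨mk a b (c + u * b), ha, hb, by simpa [shear] using hc⟩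

/- Points at distance `< B` whose first point lies in an `x`-column `[u, u + (T + 1) · 2B)` have
`shear u` differing by less than `B² + (T + 1) · 2B · B` (`abs_shear_sub_lt`). -/
def zScale (B T : ℤ) : ℤ := B ^ 2 + (T + 1) * (2 * B) * B

lemma zScale_pos (B T : ℕ+) : 0 < zScale B T := by
  unfold zScale
  positivity

section Pieces

variable (B T₁ T₂ : ℕ+)

def xWall (t₁ : ℕ+) : ℤ × ℤ × ℤ → Set Heisenberg
  | (j, r, q) => box (wallStart B T₁ j t₁) (wallIco B T₁ j t₁) (blockIco B r)
      (blockIco (zScale B T₁) q)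

def yWall (t₁ t₂ : ℕ+) : ℤ × ℤ × ℤ → Set Heisenberg
  | (j, m, q) => box (wallStart B T₁ j t₁) (tileIco B T₁ j t₁) (wallIco B T₂ m t₂)
      (blockIco (zScale B T₁) q)

def zWall (t₁ t₂ : ℕ+) : ℤ × ℤ × ℤ → Set Heisenberg
  | (j, m, n) => box (wallStart B T₁ j t₁) (tileIco B T₁ j t₁) (tileIco B T₂ m t₂)
      (wallIco (zScale B T₁) T₂ n t₂)

def brick (t₁ t₂ : ℕ+) : ℤ × ℤ × ℤ → Set Heisenberg
  | (j, m, n) => box (wallStart B T₁ j t₁) (tileIco B T₁ j t₁) (tileIco B T₂ m t₂)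
      (tileIco (zScale B T₁) T₂ n t₂)

def xWalls (t₁ : ℕ+) (s : Fin 4) : Set (Set Heisenberg) :=
  xWall B T₁ t₁ '' {c | c.2.1 % 2 + 2 * (c.2.2 % 2) = s}

/- The `z`-walls form families `2` and `3` alike, so that both directions have four families. -/
def yzWalls (t₁ t₂ : ℕ+) (s : Fin 4) : Set (Set Heisenberg) :=
  if (s : ℕ) < 2 then yWall B T₁ T₂ t₁ t₂ '' {c | c.2.2 % 2 = s}
  else range (zWall B T₁ T₂ t₁ t₂)

def bricks (t₁ t₂ : ℕ+) : Set (Set Heisenberg) := range (brick B T₁ T₂ t₁ t₂)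

def walls (T l : Fin 2 → ℕ+) : Fin 2 → Fin 4 → Set (Set Heisenberg) :=
  ![xWalls B (T 0) (l 0), yzWalls B (T 0) (T 1) (l 0) (l 1)]

lemma exists_mem_walls_or_bricks (T l : Fin 2 → ℕ+) (g : Heisenberg) :
    (∃ i s, g ∈ ⋃₀ walls B T l i s) ∨ g ∈ ⋃₀ bricks B (T 0) (T 1) (l 0) (l 1) := by
  have hB : (0 : ℤ) < B := by positivity
  have hZ := zScale_pos B (T 0)
  obtain ⟨j, hx | hx⟩ := exists_mem_wallIco_or_tileIco hB (T := T 0) (by positivity) (l 0) (xc g)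
  all_goals set u := wallStart B (T 0) j (l 0)
  · obtain ⟨r, hy⟩ := exists_mem_blockIco hB (yc g)
    obtain ⟨q, hz⟩ := exists_mem_blockIco hZ (shear u g)
    refine Or.inl ⟨0, ⟨(r % 2 + 2 * (q % 2)).toNat, by omega⟩, _,
      ⟨(j, r, q), ?_, rfl⟩, hx, hy, hz⟩
    simp only [mem_ofPred_eq]
    omega
  obtain ⟨m, hy | hy⟩ := exists_mem_wallIco_or_tileIco hB (T := T 1) (by positivity) (l 1) (yc g)
  · obtain ⟨q, hz⟩ := exists_mem_blockIco hZ (shear u g)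
    refine Or.inl ⟨1, ⟨(q % 2).toNat, by omega⟩, yWall B (T 0) (T 1) (l 0) (l 1) (j, m, q), ?_,
      hx, hy, hz⟩
    show _ ∈ yzWalls B (T 0) (T 1) (l 0) (l 1) _
    rw [yzWalls, if_pos (by simp only; omega)]
    exact ⟨(j, m, q), by simp only [mem_ofPred_eq]; omega, rfl⟩
  obtain ⟨n, hz | hz⟩ := exists_mem_wallIco_or_tileIco hZ (T := T 1) (by positivity) (l 1)
    (shear u g)
  · exact Or.inl ⟨1, 2, zWall B (T 0) (T 1) (l 0) (l 1) (j, m, n),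
      by simp [walls, yzWalls], hx, hy, hz⟩
  · exact Or.inr ⟨brick B (T 0) (T 1) (l 0) (l 1) (j, m, n), mem_range_self _, hx, hy, hz⟩

end Pieces

section Metric

variable [MetricSpace Heisenberg]

lemma abs_coords_lt_of_dist_lt (hd : IsWordMetric Heisenberg gens) {g h : Heisenberg} {B : ℕ}
    (hgh : dist g h < B) :
    |xc h - xc g| < B ∧ |yc h - yc g| < B ∧ |zc (g⁻¹ * h)| < (B : ℤ) ^ 2 := by
  obtain ⟨L, hL, hprod, hlen⟩ := exists_word_length_eq_wordLength (exists_word (g⁻¹ * h))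
  have hn : (L.length : ℤ) < B := by
    rw [hd, ← hlen] at hgh
    exact_mod_cast hgh
  obtain ⟨hx, hy, hz⟩ := abs_coords_prod_le L hL
  obtain ⟨ex, ey, -⟩ := coords_inv_mul g h
  rw [hprod, ex] at hx
  rw [hprod, ey] at hy
  rw [hprod] at hz
  refine ⟨hx.trans_lt hn, hy.trans_lt hn, hz.trans_lt ?_⟩
  exact pow_lt_pow_left₀ hn (by positivity) two_ne_zero

lemma dist_le_abs_coords (hd : IsWordMetric Heisenberg gens) (g h : Heisenberg) :
    dist g h ≤ ((|xc h - xc g| + |yc h - yc g| +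
      |zc (g⁻¹ * h) - (xc h - xc g) * (yc h - yc g)| : ℤ) : ℝ) := by
  obtain ⟨L, hL, hprod, hlen⟩ := exists_word_mk (xc (g⁻¹ * h)) (yc (g⁻¹ * h)) (zc (g⁻¹ * h))
  have hle := wordLength_le_length hL
  rw [hprod, mk_xc_yc_zc, hlen] at hle
  obtain ⟨ex, ey, -⟩ := coords_inv_mul g h
  rw [ex, ey] at hle
  rw [hd]
  have hle' := Int.ofNat_le.mpr hle
  push_cast [Int.natCast_natAbs] at hle'
  exact_mod_cast hle'

lemma abs_shear_sub_lt (hd : IsWordMetric Heisenberg gens) {g h : Heisenberg} {B : ℕ}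
    (hgh : dist g h < B) {u M : ℤ} (hg : xc g ∈ Ico u (u + M)) :
    |shear u h - shear u g| < B ^ 2 + M * B := by
  obtain ⟨-, hy, hz⟩ := abs_coords_lt_of_dist_lt hd hgh
  obtain ⟨hu, huM⟩ := hg
  have hxy : |(xc g - u) * (yc h - yc g)| ≤ M * B := by
    rw [abs_mul]
    exact mul_le_mul (abs_le.mpr ⟨by linarith, by linarith⟩) hy.le (abs_nonneg _) (by linarith)
  calc |shear u h - shear u g| = |zc (g⁻¹ * h) + (xc g - u) * (yc h - yc g)| := by
        rw [zc_inv_mul_eq_shear u]; ring_nf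
    _ ≤ |zc (g⁻¹ * h)| + |(xc g - u) * (yc h - yc g)| := abs_add_le _ _
    _ < B ^ 2 + M * B := by linarith
lemma dist_le_of_mem_box (hd : IsWordMetric Heisenberg gens) {u v w a b c : ℤ} {g h : Heisenberg}
    (hg : g ∈ box u (Ico u (u + a)) (Ico v (v + b)) (Ico w (w + c)))
    (hh : h ∈ box u (Ico u (u + a)) (Ico v (v + b)) (Ico w (w + c))) :
    dist g h ≤ ((a + b + c + a * b : ℤ) : ℝ) := by
  obtain ⟨⟨hx₁, hx₂⟩, ⟨hy₁, hy₂⟩, ⟨hz₁, hz₂⟩⟩ := hg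
  obtain ⟨⟨hx₁', hx₂'⟩, ⟨hy₁', hy₂'⟩, ⟨hz₁', hz₂'⟩⟩ := hh
  have hΔy : |yc h - yc g| ≤ b := abs_le.mpr ⟨by linarith, by linarith⟩
  have hxy : |(xc h - u) * (yc h - yc g)| ≤ a * b := by
    rw [abs_mul]
    exact mul_le_mul (abs_le.mpr ⟨by linarith, by linarith⟩) hΔy (abs_nonneg _) (by linarith)
  have hz : |zc (g⁻¹ * h) - (xc h - xc g) * (yc h - yc g)| ≤ c + a * b := by
    rw [zc_inv_mul_eq_shear u]
    calc _ = |(shear u h - shear u g) - (xc h - u) * (yc h - yc g)| := by ring_nf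
      _ ≤ |shear u h - shear u g| + |(xc h - u) * (yc h - yc g)| := abs_sub _ _
      _ ≤ c + a * b := add_le_add (abs_le.mpr ⟨by linarith, by linarith⟩) hxy
  have hΔx : |xc h - xc g| ≤ a := abs_le.mpr ⟨by linarith, by linarith⟩
  exact (dist_le_abs_coords hd g h).trans (by exact_mod_cast (by linarith))

lemma unifBounded_of_subset_box (hd : IsWordMetric Heisenberg gens) {a b c : ℤ} (ha : 0 < a)
    (hb : 0 < b) (hc : 0 < c) {𝒰 : Set (Set Heisenberg)}
    (h𝒰 : ∀ U ∈ 𝒰, ∃ u v w, U ⊆ box u (Ico u (u + a)) (Ico v (v + b)) (Ico w (w + c))) :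
    UnifBounded 𝒰 := by
  refine ⟨((a + b + c + a * b : ℤ) : ℝ), by positivity, fun U hU g hg h hh => ?_⟩
  obtain ⟨u, v, w, hsub⟩ := h𝒰 U hU
  exact dist_le_of_mem_box hd (hsub hg) (hsub hh)
variable {B T₁ T₂ : ℕ+}

lemma xWall_eq_of_dist_lt (hd : IsWordMetric Heisenberg gens) {t t' : ℕ+} (ht : t ≤ T₁)
    (ht' : t' ≤ T₁) {c c' : ℤ × ℤ × ℤ} (hr : c.2.1 % 2 = c'.2.1 % 2)
    (hq : c.2.2 % 2 = c'.2.2 % 2) {g g' : Heisenberg} (hg : g ∈ xWall B T₁ t c)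
    (hg' : g' ∈ xWall B T₁ t' c') (hgg : dist g g' < B) : t = t' ∧ c = c' := by
  obtain ⟨j, r, q⟩ := c
  obtain ⟨j', r', q'⟩ := c'
  obtain ⟨hx, hy, hz⟩ := hg
  obtain ⟨hx', hy', hz'⟩ := hg'
  obtain ⟨hΔx, hΔy, -⟩ := abs_coords_lt_of_dist_lt hd hgg
  obtain ⟨rfl, htt⟩ := eq_of_mem_wallIco ⟨by positivity, by exact_mod_cast ht'⟩
    ⟨by positivity, by exact_mod_cast ht⟩ hx' hx hΔx
  obtain rfl : t' = t := by exact_mod_cast htt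
  obtain rfl := eq_of_mem_blockIco hy' hy hr.symm hΔy
  obtain rfl := eq_of_mem_blockIco hz' hz hq.symm
    (abs_shear_sub_lt hd hgg (wallIco_subset (by positivity) (by positivity) _ _ hx))
  exact ⟨rfl, rfl⟩
lemma yWall_eq_of_dist_lt (hd : IsWordMetric Heisenberg gens) {t₁ t t' : ℕ+} (ht : t ≤ T₂)
    (ht' : t' ≤ T₂) {c c' : ℤ × ℤ × ℤ} (hq : c.2.2 % 2 = c'.2.2 % 2) {g g' : Heisenberg}
    (hg : g ∈ yWall B T₁ T₂ t₁ t c) (hg' : g' ∈ yWall B T₁ T₂ t₁ t' c') (hgg : dist g g' < B) :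
    t = t' ∧ c = c' := by
  obtain ⟨j, m, q⟩ := c
  obtain ⟨j', m', q'⟩ := c'
  obtain ⟨hx, hy, hz⟩ := hg
  obtain ⟨hx', hy', hz'⟩ := hg'
  obtain ⟨hΔx, hΔy, -⟩ := abs_coords_lt_of_dist_lt hd hgg
  obtain rfl := eq_of_mem_tileIco hx' hx hΔx
  obtain ⟨rfl, htt⟩ := eq_of_mem_wallIco ⟨by positivity, by exact_mod_cast ht'⟩
    ⟨by positivity, by exact_mod_cast ht⟩ hy' hy hΔy
  obtain rfl : t' = t := by exact_mod_cast htt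
  obtain rfl := eq_of_mem_blockIco hz' hz hq.symm
    (abs_shear_sub_lt hd hgg (tileIco_subset (by positivity) _ _ hx))
  exact ⟨rfl, rfl⟩

lemma zWall_eq_of_dist_lt (hd : IsWordMetric Heisenberg gens) {t₁ t t' : ℕ+} (ht : t ≤ T₂)
    (ht' : t' ≤ T₂) {c c' : ℤ × ℤ × ℤ} {g g' : Heisenberg} (hg : g ∈ zWall B T₁ T₂ t₁ t c)
    (hg' : g' ∈ zWall B T₁ T₂ t₁ t' c') (hgg : dist g g' < B) : t = t' ∧ c = c' := by
  obtain ⟨j, m, n⟩ := c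
  obtain ⟨j', m', n'⟩ := c'
  obtain ⟨hx, hy, hz⟩ := hg
  obtain ⟨hx', hy', hz'⟩ := hg'
  obtain ⟨hΔx, hΔy, -⟩ := abs_coords_lt_of_dist_lt hd hgg
  obtain rfl := eq_of_mem_tileIco hx' hx hΔx
  obtain ⟨rfl, htt⟩ := eq_of_mem_wallIco ⟨by positivity, by exact_mod_cast ht'⟩
    ⟨by positivity, by exact_mod_cast ht⟩ hz' hz
    (abs_shear_sub_lt hd hgg (tileIco_subset (by positivity) _ _ hx))
  obtain rfl : t' = t := by exact_mod_cast htt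
  obtain rfl := eq_of_mem_tileIco hy' hy hΔy
  exact ⟨rfl, rfl⟩

lemma brick_eq_of_dist_lt (hd : IsWordMetric Heisenberg gens) {t₁ t₂ : ℕ+} {c c' : ℤ × ℤ × ℤ}
    {g g' : Heisenberg} (hg : g ∈ brick B T₁ T₂ t₁ t₂ c) (hg' : g' ∈ brick B T₁ T₂ t₁ t₂ c')
    (hgg : dist g g' < B) : c = c' := by
  obtain ⟨j, m, n⟩ := c
  obtain ⟨j', m', n'⟩ := c'
  obtain ⟨hx, hy, hz⟩ := hg
  obtain ⟨hx', hy', hz'⟩ := hg'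
  obtain ⟨hΔx, hΔy, -⟩ := abs_coords_lt_of_dist_lt hd hgg
  obtain rfl := eq_of_mem_tileIco hx' hx hΔx
  obtain rfl := eq_of_mem_tileIco hy' hy hΔy
  obtain rfl := eq_of_mem_tileIco hz' hz
    (abs_shear_sub_lt hd hgg (tileIco_subset (by positivity) _ _ hx))
  rfl

variable (B T₁ T₂)

lemma xWalls_isDisjointTranslation (hd : IsWordMetric Heisenberg gens) (s : Fin 4) :
    IsDisjointTranslation B T₁ (fun t => xWalls B T₁ t s) := by
  refine isDisjointTranslation_image (by positivity) (fun t _ => ?_) ?_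
  · refine ⟨(0, (s : ℤ) % 2, (s : ℤ) / 2), by simp only [mem_ofPred_eq]; omega, ?_⟩
    exact box_nonempty (wallIco_nonempty (by positivity) _ _) (blockIco_nonempty (by positivity) _)
      (blockIco_nonempty (zScale_pos B T₁) _)
  · intro t ht t' ht' c hc c' hc' g hg g' hg' hgg
    simp only [mem_ofPred_eq] at hc hc'
    exact xWall_eq_of_dist_lt hd ht ht' (by omega) (by omega) hg hg' hgg

lemma yzWalls_isDisjointTranslation (hd : IsWordMetric Heisenberg gens) (t₁ : ℕ+) (s : Fin 4) :
    IsDisjointTranslation B T₂ (fun t => yzWalls B T₁ T₂ t₁ t s) := by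
  unfold yzWalls
  split_ifs with hs
  · refine isDisjointTranslation_image (by positivity) (fun t _ => ?_) ?_
    · refine ⟨(0, 0, s), by simp only [mem_ofPred_eq]; omega, ?_⟩
      exact box_nonempty (tileIco_nonempty (by positivity) (by positivity) _ _)
        (wallIco_nonempty (by positivity) _ _) (blockIco_nonempty (zScale_pos B T₁) _)
    · intro t ht t' ht' c hc c' hc' g hg g' hg' hgg
      simp only [mem_ofPred_eq] at hc hc'
      exact yWall_eq_of_dist_lt hd ht ht' (by omega) hg hg' hgg
  · simp only [← image_univ]
    refine isDisjointTranslation_image (by positivity) (fun t _ => ⟨0, trivial, ?_⟩)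
      fun t ht t' ht' c _ c' _ g hg g' hg' hgg => zWall_eq_of_dist_lt hd ht ht' hg hg' hgg
    exact box_nonempty (tileIco_nonempty (by positivity) (by positivity) _ _)
      (tileIco_nonempty (by positivity) (by positivity) _ _)
      (wallIco_nonempty (zScale_pos B T₁) _ _)

lemma bricks_rDisjoint (hd : IsWordMetric Heisenberg gens) (t₁ t₂ : ℕ+) :
    RDisjoint B (bricks B T₁ T₂ t₁ t₂) := by
  rw [bricks, ← image_univ]
  exact rDisjoint_image fun c _ c' _ g hg g' hg' hgg => brick_eq_of_dist_lt hd hg hg' hgg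

lemma walls_isDisjointTranslation (hd : IsWordMetric Heisenberg gens) (T l : Fin 2 → ℕ+)
    (i : Fin 2) (s : Fin 4) :
    IsDisjointTranslation B (T i) (fun t => walls B T (update l i t) i s) := by
  fin_cases i
  · simpa [walls] using xWalls_isDisjointTranslation B (T 0) hd s
  · simpa [walls] using yzWalls_isDisjointTranslation B (T 0) (T 1) hd (l 0) s

lemma unifBounded_of_subset_pieces (hd : IsWordMetric Heisenberg gens) (t₁ t₂ : ℕ+)
    {𝒰 : Set (Set Heisenberg)}
    (h𝒰 : 𝒰 ⊆ range (xWall B T₁ t₁) ∪ range (yWall B T₁ T₂ t₁ t₂) ∪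
      range (zWall B T₁ T₂ t₁ t₂) ∪ range (brick B T₁ T₂ t₁ t₂)) :
    UnifBounded 𝒰 := by
  have hB : (0 : ℤ) ≤ B := by positivity
  have hZ := zScale_pos B T₁
  refine unifBounded_of_subset_box hd (a := (T₁ + 1) * (2 * B)) (b := (T₂ + 1) * (2 * B))
    (c := (T₂ + 1) * (2 * zScale B T₁)) (by positivity) (by positivity)
    (mul_pos (by positivity) (by linarith)) fun U hU => ?_
  rcases h𝒰 hU with (((⟨⟨j, r, q⟩, rfl⟩ | ⟨⟨j, m, q⟩, rfl⟩) | ⟨⟨j, m, n⟩, rfl⟩) | ⟨⟨j, m, n⟩, rfl⟩)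
  · exact ⟨_, _, _, box_mono (wallIco_subset hB (by positivity) _ _)
      (blockIco_subset hB (by positivity) _) (blockIco_subset hZ.le (by positivity) _)⟩
  · exact ⟨_, _, _, box_mono (tileIco_subset hB _ _) (wallIco_subset hB (by positivity) _ _)
      (blockIco_subset hZ.le (by positivity) _)⟩
  · exact ⟨_, _, _, box_mono (tileIco_subset hB _ _) (tileIco_subset hB _ _)
      (wallIco_subset hZ.le (by positivity) _ _)⟩
  · exact ⟨_, _, _, box_mono (tileIco_subset hB _ _) (tileIco_subset hB _ _)
      (tileIco_subset hZ.le _ _)⟩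

lemma walls_unifBounded (hd : IsWordMetric Heisenberg gens) (T l : Fin 2 → ℕ+) (i : Fin 2)
    (s : Fin 4) : UnifBounded (walls B T l i s) := by
  refine unifBounded_of_subset_pieces B (T 0) (T 1) hd (l 0) (l 1) ?_
  fin_cases i
  · exact (image_subset_range _ _).trans (by grind)
  · show yzWalls B (T 0) (T 1) (l 0) (l 1) s ⊆ _
    unfold yzWalls
    split_ifs
    · exact (image_subset_range _ _).trans (by grind)
    · grind

lemma bricks_unifBounded (hd : IsWordMetric Heisenberg gens) (t₁ t₂ : ℕ+) :
    UnifBounded (bricks B T₁ T₂ t₁ t₂) :=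
  unifBounded_of_subset_pieces B T₁ T₂ hd t₁ t₂ subset_union_right

end Metric

end Heisenberg

end APC

open APC Set

/-- The integer Heisenberg group `H₃(ℤ)` (3×3 upper unitriangular integer
matrices), with the word metric of the generating set `{a, b, c}`, has the `(2,0)`-DTUT
property. -/
theorem heisenberg_dtut [MetricSpace APC.Heisenberg]
    (hword : ∀ x y : APC.Heisenberg,
      dist x y = (wordLength ({APC.aElt, APC.bElt, APC.cElt} : Set APC.Heisenberg)
        (x⁻¹ * y) : ℝ)) :
    DTUT APC.Heisenberg 2 0 := by
  refine ⟨fun _ => 3, fun h k hk => ?_⟩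
  set T : Fin 2 → ℕ+ := fun i => h (k i.succ)
  have hk₂ : ∀ i, (k i : ℝ) ≤ k 2 := fun i => by exact_mod_cast hk.monotone (Fin.le_last i)
  refine ⟨fun l _ => Heisenberg.bricks (k 2) (T 0) (T 1) (l 0) (l 1), Heisenberg.walls (k 2) T,
    fun l hl => ?_⟩
  have htr : ∀ i s, IsDisjointTranslation (k i.succ) (T i)
      (fun t => Heisenberg.walls (k 2) T (update l i t) i s) := fun i s =>
    (Heisenberg.walls_isDisjointTranslation (k 2) hword T l i s).anti (hk₂ _)
  refine ⟨⟨fun _ => Heisenberg.bricks_unifBounded _ _ _ hword _ _,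
    fun i s => Heisenberg.walls_unifBounded _ hword T l i s,
    fun _ => (Heisenberg.bricks_rDisjoint _ _ _ hword _ _).anti (hk₂ 0),
    fun i s => by simpa using (htr i s).rDisjoint (hl i), ?_⟩, htr⟩
  refine eq_univ_of_forall fun g => ?_
  rcases Heisenberg.exists_mem_walls_or_bricks (k 2) T l g with ⟨i, s, hg⟩ | hg
  · exact Or.inr (mem_iUnion₂.mpr ⟨i, s, hg⟩)
  · exact Or.inl (mem_iUnion.mpr ⟨0, hg⟩)
end
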